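/- arXiv:0704.1987 — 5 statements merged into one kernel-verified Lean document; each statement's English description precedes it below -/
import Mathlib

section
/- Let τ be a unital completely positive map on a von Neumann algebra A with a faithful invariant normal state φ₀, and suppose the dual map τ̃ satisfies φ₀(τ̃(x)y) = φ₀(x τ(y)) (trace-like/symmetric setting). Then the set G = {x ∈ A : τ̃(τ(x)) = x} is a *-subalgebra of A, and τ restricted to G is a *-isomorphism onto G̃ = {x ∈ A : τ(τ̃(x)) = x}. -/
open ComplexOrder

/-!
For `x` with `τ̃ (τ x) = x`, the Schwarz defects `τ (x⋆x) - (τ x)⋆(τ x)` and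
`τ̃ ((τ x)⋆(τ x)) - x⋆x` are positive, and the invariant state sends their sum to zero, so
faithfulness makes both vanish. These `x` form a complex subspace closed under `⋆`, so polarization
turns `τ (x⋆x) = (τ x)⋆(τ x)` into multiplicativity of `τ` on it; the same argument for the pair
`(τ̃, τ)` shows that the subspace is closed under products.
-/

section StarOrderedAlgebra

variable {A : Type*} [Ring A] [StarRing A] [Algebra ℂ A] [PartialOrder A] [StarOrderedRing A]

/-- There is no `StarModule ℂ A` in this setting; the order alone forces `star I = -I`. -/
theorem star_algebraMap_I : star (algebraMap ℂ A Complex.I) = -algebraMap ℂ A Complex.I := by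
  set j := algebraMap ℂ A Complex.I
  have hj2 : j * j = -1 := by rw [← map_mul, Complex.I_mul_I, map_neg, map_one]
  have hp2 : star j * j * (star j * j) = 1 := by
    calc star j * j * (star j * j) = star j * (j * star j) * j := by noncomm_ring
      _ = star (j * j) * (j * j) := by
        rw [Algebra.commutes Complex.I (star j), star_mul]; noncomm_ring
      _ = 1 := by rw [hj2, star_neg, star_one, neg_one_mul, neg_neg]
  set p := star j * j
  set q := 1 - p
  have hq_star : star q = q := by simp [q, p]
  have hq2 : star q * q = q + q := by
    rw [hq_star]; simp only [q, sub_mul, mul_sub, hp2]; noncomm_ring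
  -- `p * q = -q`, so the positive element `star q * p * q` equals `-(q + q)`.
  have hneg : star q * p * q = -(q + q) := by
    rw [← hq2, hq_star, mul_assoc]; simp only [q, mul_sub, hp2]; noncomm_ring
  have hqq : q + q = 0 :=
    le_antisymm (neg_nonneg.mp (hneg ▸ star_left_conjugate_nonneg (star_mul_self_nonneg j) q))
      (hq2 ▸ star_mul_self_nonneg q)
  have hp : p = 1 := by
    rw [← two_smul ℂ q] at hqq
    exact (sub_eq_zero.mp ((smul_eq_zero.mp hqq).resolve_left two_ne_zero)).symm
  calc star j = p * -j := by rw [mul_neg, mul_assoc, hj2, mul_neg_one, neg_neg]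
    _ = -j := by rw [hp, one_mul]

theorem star_I_smul (x : A) : star (Complex.I • x) = -(Complex.I • star x) := by
  rw [Algebra.smul_def, star_mul, star_algebraMap_I, mul_neg, ← Algebra.commutes,
    ← Algebra.smul_def]

theorem map_star_mul_of_map_star_mul_self {τ : A →ₗ[ℂ] A} {S : Submodule ℂ A}
    (hS : ∀ z ∈ S, τ (star z * z) = star (τ z) * τ z) {x y : A} (hx : x ∈ S) (hy : y ∈ S) :
    τ (star x * y) = star (τ x) * τ y := by
  set D : A → A → A := fun u v => τ (star u * v) - star (τ u) * τ v
  have hD_self : ∀ z ∈ S, D z z = 0 := fun z hz => sub_eq_zero.mpr (hS z hz)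
  have hD_add : ∀ u v, D (u + v) (u + v) = D u u + D u v + D v u + D v v := fun u v => by
    simp only [D, star_add, add_mul, mul_add, map_add]; abel
  have hD_I : ∀ u v, D u (Complex.I • v) + D (Complex.I • v) u = Complex.I • (D u v - D v u) :=
    fun u v => by
      simp only [D, map_smul, star_I_smul, mul_smul_comm, neg_mul, smul_mul_assoc, map_neg,
        smul_sub]
      abel
  have hD_symm : ∀ u ∈ S, ∀ v ∈ S, D u v + D v u = 0 := fun u hu v hv => by
    have := hD_add u v
    rw [hD_self _ (S.add_mem hu hv), hD_self u hu, hD_self v hv] at this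
    rwa [zero_add, add_zero, eq_comm] at this
  have hanti : D x y - D y x = 0 := by
    have h := hD_symm x hx _ (S.smul_mem Complex.I hy)
    rw [hD_I] at h
    exact (smul_eq_zero.mp h).resolve_left Complex.I_ne_zero
  have hDxy : D x y = 0 := by
    have h : (2 : ℂ) • D x y = 0 := by
      calc (2 : ℂ) • D x y = (D x y + D y x) + (D x y - D y x) := by rw [two_smul]; abel
        _ = 0 := by rw [hD_symm x hx y hy, hanti, add_zero]
    exact (smul_eq_zero.mp h).resolve_left two_ne_zero
  exact sub_eq_zero.mp hDxy

structure IsSchwarzMap (τ : A →ₗ[ℂ] A) : Prop where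
  map_star : ∀ x, τ (star x) = star (τ x)
  star_mul_le : ∀ x, star (τ x) * τ x ≤ τ (star x * x)

variable {τ τt : A →ₗ[ℂ] A} {φ : A →ₗ[ℂ] ℂ}

theorem IsSchwarzMap.map_star_mul_self_of_comp_apply_eq (hτ : IsSchwarzMap τ)
    (hτt : IsSchwarzMap τt) (hφpos : ∀ x, 0 ≤ x → 0 ≤ φ x)
    (hfaithful : ∀ x, 0 ≤ x → φ x = 0 → x = 0)
    (hφτ : ∀ x, φ (τ x) = φ x) (hφτt : ∀ x, φ (τt x) = φ x) {z : A} (hz : τt (τ z) = z) :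
    τ (star z * z) = star (τ z) * τ z := by
  have ha : 0 ≤ τ (star z * z) - star (τ z) * τ z := sub_nonneg.mpr (hτ.star_mul_le z)
  have hb : 0 ≤ τt (star (τ z) * τ z) - star z * z := by
    simpa [hz] using sub_nonneg.mpr (hτt.star_mul_le (τ z))
  have hsum : φ (τ (star z * z) - star (τ z) * τ z)
      + φ (τt (star (τ z) * τ z) - star z * z) = 0 := by
    simp only [map_sub, hφτ, hφτt]; ring
  have hφa : φ (τ (star z * z) - star (τ z) * τ z) = 0 :=
    le_antisymm (eq_neg_of_add_eq_zero_left hsum ▸ neg_nonpos.mpr (hφpos _ hb)) (hφpos _ ha)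
  exact sub_eq_zero.mp (hfaithful _ ha hφa)

theorem IsSchwarzMap.map_mul_of_comp_apply_eq (hτ : IsSchwarzMap τ)
    (hτt : IsSchwarzMap τt) (hφpos : ∀ x, 0 ≤ x → 0 ≤ φ x)
    (hfaithful : ∀ x, 0 ≤ x → φ x = 0 → x = 0)
    (hφτ : ∀ x, φ (τ x) = φ x) (hφτt : ∀ x, φ (τt x) = φ x) {x y : A}
    (hx : τt (τ x) = x) (hy : τt (τ y) = y) :
    τ (x * y) = τ x * τ y := by
  let G := LinearMap.eqLocus (τt ∘ₗ τ) LinearMap.id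
  have hG : ∀ z ∈ G, τ (star z * z) = star (τ z) * τ z := fun z hz =>
    hτ.map_star_mul_self_of_comp_apply_eq hτt hφpos hfaithful hφτ hφτt hz
  have hx' : star x ∈ G := by
    simp [G, LinearMap.mem_eqLocus, hτ.map_star, hτt.map_star, hx]
  simpa [hτ.map_star] using map_star_mul_of_map_star_mul_self hG hx' (show y ∈ G from hy)

end StarOrderedAlgebra

theorem fixed_algebra_of_adjoint_pair_general
    {A : Type*} [Ring A] [StarRing A] [Algebra ℂ A]
    [PartialOrder A] [StarOrderedRing A]
    (τ τt : A →ₗ[ℂ] A)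
    (hτ1 : τ 1 = 1) (hτt1 : τt 1 = 1)
    (hτKS : ∀ x : A, τ (star x) * τ x ≤ τ (star x * x))
    (hτtKS : ∀ x : A, τt (star x) * τt x ≤ τt (star x * x))
    (hτstar : ∀ x : A, τ (star x) = star (τ x))
    (hτtstar : ∀ x : A, τt (star x) = star (τt x))
    (φ₀ : A →ₗ[ℂ] ℂ) (hφpos : ∀ x : A, 0 ≤ x → 0 ≤ φ₀ x)
    (hfaithful : ∀ x : A, 0 ≤ x → φ₀ x = 0 → x = 0)
    (hinv : ∀ x : A, φ₀ (τ x) = φ₀ x)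
    (hadj : ∀ x y : A, φ₀ (τt x * y) = φ₀ (x * τ y)) :
    -- `G = {x | τ̃ (τ x) = x}` is a *-subalgebra:
    (τt (τ (1 : A)) = 1) ∧
    (∀ x y : A, τt (τ x) = x → τt (τ y) = y → τt (τ (x + y)) = x + y) ∧
    (∀ (c : ℂ) (x : A), τt (τ x) = x → τt (τ (c • x)) = c • x) ∧
    (∀ x y : A, τt (τ x) = x → τt (τ y) = y → τt (τ (x * y)) = x * y) ∧
    (∀ x : A, τt (τ x) = x → τt (τ (star x)) = star x) ∧
    -- `τ` maps `G` into `G̃ = {x | τ (τ̃ x) = x}`, injectively and onto,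
    (∀ x : A, τt (τ x) = x → τ (τt (τ x)) = τ x) ∧
    (∀ x y : A, τt (τ x) = x → τt (τ y) = y → τ x = τ y → x = y) ∧
    (∀ y : A, τ (τt y) = y → ∃ x : A, τt (τ x) = x ∧ τ x = y) ∧
    -- and is multiplicative and star-preserving on `G`:
    (∀ x y : A, τt (τ x) = x → τt (τ y) = y → τ (x * y) = τ x * τ y) ∧
    (∀ x : A, τt (τ x) = x → τ (star x) = star (τ x)) := by
  have hτ : IsSchwarzMap τ := ⟨hτstar, fun x => hτstar x ▸ hτKS x⟩
  have hτt : IsSchwarzMap τt := ⟨hτtstar, fun x => hτtstar x ▸ hτtKS x⟩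
  have hinvt : ∀ x, φ₀ (τt x) = φ₀ x := fun x => by simpa [hτ1] using hadj x 1
  have hmul : ∀ x y, τt (τ x) = x → τt (τ y) = y → τ (x * y) = τ x * τ y :=
    fun _ _ => hτ.map_mul_of_comp_apply_eq hτt hφpos hfaithful hinv hinvt
  have hmult : ∀ x y, τ (τt x) = x → τ (τt y) = y → τt (x * y) = τt x * τt y :=
    fun _ _ => hτt.map_mul_of_comp_apply_eq hτ hφpos hfaithful hinvt hinv
  refine ⟨by rw [hτ1, hτt1], fun x y hx hy => ?_, fun c x hx => ?_, fun x y hx hy => ?_,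
    fun x hx => ?_, fun x hx => by rw [hx], fun x y hx hy h => by rw [← hx, ← hy, h],
    fun y hy => ⟨τt y, by rw [hy], hy⟩, hmul, fun x _ => hτstar x⟩
  · rw [map_add, map_add, hx, hy]
  · rw [map_smul, map_smul, hx]
  · rw [hmul x y hx hy, hmult _ _ (by rw [hx]) (by rw [hy]), hx, hy]
  · rw [hτstar, hτtstar, hx]

/-- for a unital completely positive (Kadison–Schwarz) map `τ` with
faithful invariant (tracial) normal state `φ₀` and GNS-adjoint `τ̃`, the set
`G = {x | τ̃ (τ x) = x}` is a *-subalgebra and `τ` restricts to a *-isomorphism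
from `G` onto `G̃ = {x | τ (τ̃ x) = x}`. -/
theorem fixed_algebra_of_adjoint_pair
    {A : Type*} [Ring A] [StarRing A] [Algebra ℂ A]
    [PartialOrder A] [StarOrderedRing A]
    (τ τt : A →ₗ[ℂ] A)
    (hτ1 : τ 1 = 1) (hτt1 : τt 1 = 1)
    (hτpos : ∀ x : A, 0 ≤ x → 0 ≤ τ x) (hτtpos : ∀ x : A, 0 ≤ x → 0 ≤ τt x)
    (hτKS : ∀ x : A, τ (star x) * τ x ≤ τ (star x * x))
    (hτtKS : ∀ x : A, τt (star x) * τt x ≤ τt (star x * x))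
    (hτstar : ∀ x : A, τ (star x) = star (τ x))
    (hτtstar : ∀ x : A, τt (star x) = star (τt x))
    (φ₀ : A →ₗ[ℂ] ℂ) (hφpos : ∀ x : A, 0 ≤ x → 0 ≤ φ₀ x) (hφ1 : φ₀ 1 = 1)
    (hfaithful : ∀ x : A, 0 ≤ x → φ₀ x = 0 → x = 0)
    (htrace : ∀ x y : A, φ₀ (x * y) = φ₀ (y * x))
    (hinv : ∀ x : A, φ₀ (τ x) = φ₀ x)
    (hadj : ∀ x y : A, φ₀ (τt x * y) = φ₀ (x * τ y)) :
    -- `G = {x | τ̃ (τ x) = x}` is a *-subalgebra: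
    (τt (τ (1 : A)) = 1) ∧
    (∀ x y : A, τt (τ x) = x → τt (τ y) = y → τt (τ (x + y)) = x + y) ∧
    (∀ (c : ℂ) (x : A), τt (τ x) = x → τt (τ (c • x)) = c • x) ∧
    (∀ x y : A, τt (τ x) = x → τt (τ y) = y → τt (τ (x * y)) = x * y) ∧
    (∀ x : A, τt (τ x) = x → τt (τ (star x)) = star x) ∧
    -- `τ` maps `G` into `G̃ = {x | τ (τ̃ x) = x}`, injectively and onto,
    (∀ x : A, τt (τ x) = x → τ (τt (τ x)) = τ x) ∧
    (∀ x y : A, τt (τ x) = x → τt (τ y) = y → τ x = τ y → x = y) ∧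
    (∀ y : A, τ (τt y) = y → ∃ x : A, τt (τ x) = x ∧ τ x = y) ∧
    -- and is multiplicative and star-preserving on `G`:
    (∀ x y : A, τt (τ x) = x → τt (τ y) = y → τ (x * y) = τ x * τ y) ∧
    (∀ x : A, τt (τ x) = x → τ (star x) = star (τ x)) :=
  fixed_algebra_of_adjoint_pair_general τ τt hτ1 hτt1 hτKS hτtKS hτstar hτtstar φ₀ hφpos hfaithful
    hinv hadj
end

section
/- Let τ be a unital completely positive map on a finite-dimensional C*-algebra (or type-I factor) A with faithful invariant state φ₀. Then (A, τ, φ₀) is strongly mixing if and only if (i) it is ergodic (the fixed-point set of τ is ℂ·1) and (ii) the peripheral point spectrum of τ is trivial: {w ∈ S¹ : ∃ x ≠ 0, τ(x) = wx} = {1}. -/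
/-!
The form `⟨x, y⟩ = φ₀(x⋆y)` is an inner product on `A` (faithfulness), and by Kadison–Schwarz and
invariance `τ` is a contraction for it. Hence all eigenvalues of `τ` lie in the closed unit disc,
and the peripheral ones are semisimple: after rotating the eigenvalue to `1`, a Jordan chain
`τ x = x`, `τ y = y + x` would give `‖y + n x‖_φ ≤ ‖y‖_φ` for all `n`. Decomposing `A` into
generalized eigenspaces, the components with `|μ| < 1` decay to `0` (and so have `φ₀ = 0`), while
those with `|μ| = 1` are eigenvectors, which ergodicity and the trivial peripheral spectrum make
multiples of `1`. Conversely, under mixing a fixed point equals its limit `φ₀(x) 1`, and the orbit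
`wⁿ x` of a peripheral eigenvector converges only if `w = 1`.
-/

open ComplexOrder Filter Topology

theorem tendsto_choose_mul_pow_sub_of_norm_lt_one {R : Type*} [NormedRing R]
    [HasSummableGeomSeries R] (k : ℕ) {r : R} (hr : ‖r‖ < 1) :
    Tendsto (fun n ↦ (n.choose k : R) * r ^ (n - k)) atTop (𝓝 0) := by
  rw [← tendsto_add_atTop_iff_nat k]
  simpa using (summable_choose_mul_geometric_of_norm_lt_one k hr).tendsto_atTop_zero

namespace Module.End

open Finset

theorem pow_apply_eq_sum_of_pow_sub_smul_apply_eq_zero {R M : Type*} [CommRing R]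
    [AddCommGroup M] [Module R M] (f : End R M) (μ : R) {k : ℕ} {z : M}
    (hz : ((f - μ • 1) ^ k) z = 0) (n : ℕ) :
    (f ^ n) z = ∑ j ∈ range k, ((n.choose j : R) * μ ^ (n - j)) • ((f - μ • 1) ^ j) z := by
  set g : ℕ → M := fun j ↦ ((n.choose j : R) * μ ^ (n - j)) • ((f - μ • 1) ^ j) z
  have hcomm : Commute (f - μ • 1) (μ • 1) := (Commute.one_right _).smul_right μ
  have hbinomial : (f ^ n) z = ∑ j ∈ range (n + 1), g j := by
    conv_lhs => rw [← sub_add_cancel f (μ • 1), hcomm.add_pow, LinearMap.sum_apply]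
    refine sum_congr rfl fun j _ ↦ ?_
    simp only [g, mul_apply, natCast_apply, smul_pow, one_pow, LinearMap.smul_apply, one_apply,
      map_smul, ← Nat.cast_smul_eq_nsmul R, smul_smul]
  have hlow : ∑ j ∈ range (n + 1), g j = ∑ j ∈ range (n + 1 + k), g j :=
    sum_subset (range_subset_range.2 (by omega)) fun j _ hj ↦ by
      simp [g, Nat.choose_eq_zero_of_lt (by simp at hj; omega : n < j)]
  have hhigh : ∑ j ∈ range k, g j = ∑ j ∈ range (n + 1 + k), g j :=
    sum_subset (range_subset_range.2 (by omega)) fun j _ hj ↦ by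
      simp [g, pow_map_zero_of_le (by simpa using hj) hz]
  rw [hbinomial, hlow, hhigh]

theorem tendsto_pow_apply_of_mem_maxGenEigenspace {𝕜 E : Type*} [NormedField 𝕜] [CompleteSpace 𝕜]
    [AddCommGroup E] [Module 𝕜 E] [TopologicalSpace E] [ContinuousAdd E]
    [ContinuousSMul 𝕜 E] (f : End 𝕜 E) {μ : 𝕜} (hμ : ‖μ‖ < 1) {z : E}
    (hz : z ∈ f.maxGenEigenspace μ) : Tendsto (fun n ↦ (f ^ n) z) atTop (𝓝 0) := by
  obtain ⟨k, hk⟩ := (f.mem_maxGenEigenspace μ z).1 hz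
  simp_rw [pow_apply_eq_sum_of_pow_sub_smul_apply_eq_zero f μ hk]
  simpa using tendsto_finsetSum (range k) fun j _ ↦
    (tendsto_choose_mul_pow_sub_of_norm_lt_one j hμ).smul_const (((f - μ • 1) ^ j) z)

theorem apply_eq_smul_of_mem_maxGenEigenspace {R M : Type*} [CommRing R] [AddCommGroup M]
    [Module R M] {f : End R M} {μ : R} (h : ∀ x y, f x = μ • x → f y = μ • y + x → x = 0)
    {z : M} (hz : z ∈ f.maxGenEigenspace μ) : f z = μ • z := by
  obtain ⟨k, hk⟩ := (f.mem_maxGenEigenspace μ z).1 hz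
  induction k generalizing z with
  | zero => simp_all
  | succ k ih =>
    rw [pow_succ, mul_apply] at hk
    have hchain := h _ z (ih (mem_maxGenEigenspace _ _ _ |>.2 ⟨k, hk⟩) hk)
    simp only [LinearMap.sub_apply, LinearMap.smul_apply, one_apply] at hchain ⊢
    exact sub_eq_zero.1 (hchain (by abel))

theorem tendsto_pow_apply_of_forall_mem_maxGenEigenspace {K V : Type*} [Field K]
    [IsAlgClosed K] [AddCommGroup V] [Module K V] [FiniteDimensional K V] [TopologicalSpace V]
    [ContinuousAdd V] (f L : End K V)
    (h : ∀ μ, ∀ z ∈ f.maxGenEigenspace μ, Tendsto (fun n ↦ (f ^ n) z) atTop (𝓝 (L z))) (x : V) :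
    Tendsto (fun n ↦ (f ^ n) x) atTop (𝓝 (L x)) :=
  Submodule.iSup_induction _ (motive := fun x ↦ Tendsto (fun n ↦ (f ^ n) x) atTop (𝓝 (L x)))
    (f.iSup_maxGenEigenspace_eq_top ▸ Submodule.mem_top) h (by simpa using tendsto_const_nhds)
    fun _ _ hx hy ↦ by simpa using hx.add hy

end Module.End

theorem eq_of_tendsto_iterate_of_isFixedPt {X : Type*} [TopologicalSpace X] [T2Space X]
    {f : X → X} {x y : X} (hx : f x = x) (h : Tendsto (fun n ↦ f^[n] x) atTop (𝓝 y)) : x = y := by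
  simpa [Function.iterate_fixed hx] using h

theorem apply_eq_apply_of_tendsto_iterate {X Y : Type*} [TopologicalSpace X] [TopologicalSpace Y]
    [T2Space Y] {f : X → X} {g : X → Y} (hg : Continuous g) (hinv : g ∘ f = g) {x y : X}
    (h : Tendsto (fun n ↦ f^[n] x) atTop (𝓝 y)) : g x = g y := by
  have hcomp := (hg.tendsto y).comp h
  simp_rw [Function.comp_def, ← Function.comp_apply (f := g), Function.iterate_invariant hinv]
    at hcomp
  exact tendsto_const_nhds_iff.1 hcomp

theorem eq_one_of_tendsto_pow_smul {𝕜 E : Type*} [NormedField 𝕜] [NormedAddCommGroup E]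
    [NormedSpace 𝕜 E] {w : 𝕜} (hw : ‖w‖ = 1) {x y : E} (hx : x ≠ 0)
    (h : Tendsto (fun n : ℕ ↦ w ^ n • x) atTop (𝓝 y)) : w = 1 := by
  have hshift := (tendsto_add_atTop_iff_nat 1).2 h
  simp only [pow_succ', mul_smul] at hshift
  have hfix : w • y = y := tendsto_nhds_unique (h.const_smul w) hshift
  have hy : ‖x‖ = ‖y‖ := by simpa [norm_smul, hw] using h.norm
  have hy0 : y ≠ 0 := norm_ne_zero_iff.1 (hy ▸ norm_ne_zero_iff.2 hx)
  have hsub : (w - 1) • y = 0 := by rw [sub_smul, one_smul, hfix, sub_self]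
  exact sub_eq_zero.1 ((smul_eq_zero.1 hsub).resolve_right hy0)

theorem map_star_mul_self_pos {A : Type*} [NonUnitalNormedRing A] [StarRing A] [CStarRing A]
    [PartialOrder A] [StarOrderedRing A] [Module ℂ A] {φ : A →ₗ[ℂ] ℂ}
    (hφ : ∀ x, 0 ≤ x → 0 ≤ φ x) (hfaithful : ∀ x, 0 ≤ x → φ x = 0 → x = 0) {x : A}
    (hx : x ≠ 0) : 0 < φ (star x * x) :=
  (hφ _ (star_mul_self_nonneg x)).lt_of_ne' fun h ↦
    hx ((CStarRing.star_mul_self_eq_zero_iff x).1 (hfaithful _ (star_mul_self_nonneg x) h))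

section GNSContraction

variable {A : Type*} [Ring A] [StarRing A] [Algebra ℂ A]

def IsGNSContraction (φ : A →ₗ[ℂ] ℂ) (T : A →ₗ[ℂ] A) : Prop :=
  ∀ x, φ (star (T x) * T x) ≤ φ (star x * x)

theorem map_star_smul_mul_smul [StarModule ℂ A] (φ : A →ₗ[ℂ] ℂ) (c : ℂ) (x : A) :
    φ (star (c • x) * (c • x)) = (‖c‖ : ℂ) ^ 2 * φ (star x * x) := by
  rw [star_smul, smul_mul_smul_comm, map_smul, smul_eq_mul, Complex.star_def, Complex.conj_mul']

theorem isGNSContraction_of_kadisonSchwarz [PartialOrder A] [StarOrderedRing A]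
    {φ : A →ₗ[ℂ] ℂ} (hφ : ∀ x, 0 ≤ x → 0 ≤ φ x) {τ : A →ₗ[ℂ] A}
    (hKS : ∀ x, star (τ x) * τ x ≤ τ (star x * x)) (hinv : ∀ x, φ (τ x) = φ x) :
    IsGNSContraction φ τ := fun x ↦ by
  simpa [hinv] using hφ _ (sub_nonneg.2 (hKS x))

namespace IsGNSContraction

variable {φ : A →ₗ[ℂ] ℂ} {T : A →ₗ[ℂ] A}

theorem pow (hT : IsGNSContraction φ T) (n : ℕ) : IsGNSContraction φ (T ^ n) := by
  induction n with
  | zero => exact fun x ↦ le_rfl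
  | succ n ih => exact fun x ↦ (ih (T x)).trans (hT x)

theorem smul [StarModule ℂ A] (hT : IsGNSContraction φ T) {c : ℂ} (hc : ‖c‖ = 1) :
    IsGNSContraction φ (c • T) := fun x ↦ by
  simpa only [LinearMap.smul_apply, map_star_smul_mul_smul, hc, Complex.ofReal_one, one_pow,
    one_mul] using hT x

theorem norm_le_one_of_apply_eq_smul [StarModule ℂ A] (hT : IsGNSContraction φ T)
    (hpos : ∀ x ≠ 0, 0 < φ (star x * x)) {μ : ℂ} {v : A} (hv : v ≠ 0) (h : T v = μ • v) :
    ‖μ‖ ≤ 1 := by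
  have hle := hT v
  rw [h, map_star_smul_mul_smul, mul_le_iff_le_one_left (hpos v hv)] at hle
  exact (pow_le_one_iff_of_nonneg (norm_nonneg μ) two_ne_zero).1 (by exact_mod_cast hle)

theorem eq_zero_of_apply_eq_add (hT : IsGNSContraction φ T)
    (hpos : ∀ x ≠ 0, 0 < φ (star x * x)) {x y : A} (hx : T x = x) (hy : T y = y + x) :
    x = 0 := by
  by_contra hx0
  have horbit (n : ℕ) : (T ^ n) y = y + (n : ℂ) • x := by
    induction n with
    | zero => simp
    | succ n ih =>
      rw [pow_succ', Module.End.mul_apply, ih, map_add, map_smul, hy, hx, Nat.cast_succ, add_smul,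
        one_smul, add_assoc, add_comm x]
  set a := (φ (star x * x)).re
  set b := (φ (star y * x) + φ (star x * y)).re
  have ha : 0 < a := (Complex.lt_def.1 (hpos x hx0)).1
  -- `‖y + n x‖²_φ = ‖Tⁿ y‖²_φ ≤ ‖y‖²_φ`, while the left side grows like `n² ‖x‖²_φ`
  have hquad (n : ℕ) : (n : ℝ) ^ 2 * a + n * b ≤ 0 := by
    have h := (Complex.le_def.1 (hT.pow n y)).1
    simp only [horbit, star_add, star_natCast_smul, mul_add, add_mul, Algebra.smul_mul_assoc,
      Algebra.mul_smul_comm, smul_add, map_add, map_smul, smul_eq_mul, Complex.add_re,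
      Complex.mul_re, Complex.natCast_re, Complex.natCast_im, zero_mul, sub_zero] at h
    simp only [a, b, Complex.add_re]
    linear_combination h
  obtain ⟨n, hn⟩ := exists_nat_gt (|b| / a)
  have hquad_n := hquad n
  rw [div_lt_iff₀ ha] at hn
  have hn0 : (0 : ℝ) < n := by nlinarith [abs_nonneg b]
  nlinarith [mul_pos hn0 (show 0 < n * a + b by linarith [neg_abs_le b])]

theorem apply_eq_smul_of_mem_maxGenEigenspace [StarModule ℂ A] (hT : IsGNSContraction φ T)
    (hpos : ∀ x ≠ 0, 0 < φ (star x * x)) {μ : ℂ} (hμ : ‖μ‖ = 1) {z : A}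
    (hz : z ∈ Module.End.maxGenEigenspace T μ) : T z = μ • z := by
  refine Module.End.apply_eq_smul_of_mem_maxGenEigenspace (fun x y hx hy ↦ ?_) hz
  have hunit : starRingEnd ℂ μ * μ = 1 := by
    rw [Complex.conj_mul', hμ]; norm_num
  have hμ0 : star μ ≠ 0 := star_ne_zero.2 (norm_ne_zero_iff.1 (by rw [hμ]; exact one_ne_zero))
  -- rotating `T` by `star μ` turns the Jordan chain at `μ` into one at `1`
  have hrot := (hT.smul (c := star μ) (by simpa using hμ)).eq_zero_of_apply_eq_add hpos
    (x := star μ • x) (y := y) (by simp [hx, smul_smul, hunit]) (by simp [hy, smul_smul, hunit])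
  exact (smul_eq_zero.1 hrot).resolve_left hμ0

end IsGNSContraction

end GNSContraction

theorem IsGNSContraction.tendsto_pow_apply {A : Type*} [NormedRing A] [StarRing A]
    [NormedAlgebra ℂ A] [StarModule ℂ A] [FiniteDimensional ℂ A] {φ : A →ₗ[ℂ] ℂ}
    {τ : A →ₗ[ℂ] A} (hτ : IsGNSContraction φ τ) (hpos : ∀ x ≠ 0, 0 < φ (star x * x))
    (hφ1 : φ 1 = 1) (hinv : ∀ x, φ (τ x) = φ x) (herg : ∀ x, τ x = x → ∃ c : ℂ, x = c • 1)
    (hper : ∀ w : ℂ, ‖w‖ = 1 → (∃ x, x ≠ 0 ∧ τ x = w • x) → w = 1) (x : A) :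
    Tendsto (fun n ↦ (τ ^ n) x) atTop (𝓝 (φ x • 1)) := by
  refine Module.End.tendsto_pow_apply_of_forall_mem_maxGenEigenspace τ (φ.smulRight 1)
    (fun μ z hz ↦ ?_) x
  rw [LinearMap.smulRight_apply]
  obtain rfl | hz0 := eq_or_ne z 0
  · simp
  have hμ : Module.End.HasEigenvalue τ μ :=
    Module.End.HasUnifEigenvalue.lt zero_lt_one (Submodule.ne_bot_iff _ |>.2 ⟨z, hz, hz0⟩)
  obtain ⟨v, hv⟩ := hμ.exists_hasEigenvector
  rcases (hτ.norm_le_one_of_apply_eq_smul hpos hv.2 hv.apply_eq_smul).lt_or_eq with hlt | hμ1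
  · have hlim := Module.End.tendsto_pow_apply_of_mem_maxGenEigenspace τ hlt hz
    have hφz : φ z = 0 := (map_zero φ).symm ▸ apply_eq_apply_of_tendsto_iterate (g := φ)
      φ.continuous_of_finiteDimensional (funext hinv) (by simpa [Module.End.pow_apply] using hlim)
    simpa [hφz] using hlim
  · have heig := hτ.apply_eq_smul_of_mem_maxGenEigenspace hpos hμ1 hz
    obtain rfl := hper μ hμ1 ⟨z, hz0, heig⟩
    rw [one_smul] at heig
    obtain ⟨c, rfl⟩ := herg _ heig
    simp_rw [Module.End.pow_apply, Function.iterate_fixed heig]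
    simp [hφ1]

theorem mixing_iff_ergodic_and_trivial_peripheral_spectrum_general
    {A : Type*} [NormedRing A] [StarRing A] [CStarRing A]
    [NormedAlgebra ℂ A] [StarModule ℂ A]
    [PartialOrder A] [StarOrderedRing A] [FiniteDimensional ℂ A]
    (τ : A →ₗ[ℂ] A)
    (hτKS : ∀ x : A, star (τ x) * τ x ≤ τ (star x * x))
    (φ₀ : A →ₗ[ℂ] ℂ) (hφpos : ∀ x : A, 0 ≤ x → 0 ≤ φ₀ x) (hφ1 : φ₀ 1 = 1)
    (hfaithful : ∀ x : A, 0 ≤ x → φ₀ x = 0 → x = 0)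
    (hinv : ∀ x : A, φ₀ (τ x) = φ₀ x) :
    -- strong mixing
    (∀ x : A, Tendsto (fun n : ℕ => τ^[n] x) atTop (nhds (φ₀ x • 1)))
      ↔
    -- ergodicity and trivial peripheral point spectrum
    ((∀ x : A, τ x = x → ∃ c : ℂ, x = c • 1) ∧
      (∀ w : ℂ, ‖w‖ = 1 → (∃ x : A, x ≠ 0 ∧ τ x = w • x) → w = 1)) := by
  have hτ := isGNSContraction_of_kadisonSchwarz hφpos hτKS hinv
  have hpos : ∀ x : A, x ≠ 0 → 0 < φ₀ (star x * x) := fun _ ↦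
    map_star_mul_self_pos hφpos hfaithful
  refine ⟨fun hmix ↦ ⟨fun x hx ↦ ⟨φ₀ x, eq_of_tendsto_iterate_of_isFixedPt hx (hmix x)⟩, ?_⟩,
    fun ⟨herg, hper⟩ x ↦ ?_⟩
  · rintro w hw ⟨x, hx0, hwx⟩
    have hx : Module.End.HasEigenvector τ w x := ⟨Module.End.mem_eigenspace_iff.2 hwx, hx0⟩
    refine eq_one_of_tendsto_pow_smul hw hx0 (y := φ₀ x • 1) ?_
    simpa [← Module.End.pow_apply, hx.pow_apply] using hmix x
  · simpa [Module.End.pow_apply] using hτ.tendsto_pow_apply hpos hφ1 hinv herg hper x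

/-- for a unital completely positive (Kadison–Schwarz) map `τ` on a
finite-dimensional C*-algebra with faithful invariant state `φ₀`:
strong mixing ⟺ ergodicity together with trivial peripheral point spectrum. -/
theorem mixing_iff_ergodic_and_trivial_peripheral_spectrum
    {A : Type*} [NormedRing A] [StarRing A] [CStarRing A]
    [NormedAlgebra ℂ A] [StarModule ℂ A] [CompleteSpace A]
    [PartialOrder A] [StarOrderedRing A] [FiniteDimensional ℂ A]
    (τ : A →ₗ[ℂ] A) (hτ1 : τ 1 = 1)
    (hτpos : ∀ x : A, 0 ≤ x → 0 ≤ τ x)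
    (hτKS : ∀ x : A, star (τ x) * τ x ≤ τ (star x * x))
    (φ₀ : A →ₗ[ℂ] ℂ) (hφpos : ∀ x : A, 0 ≤ x → 0 ≤ φ₀ x) (hφ1 : φ₀ 1 = 1)
    (hfaithful : ∀ x : A, 0 ≤ x → φ₀ x = 0 → x = 0)
    (hinv : ∀ x : A, φ₀ (τ x) = φ₀ x) :
    -- strong mixing
    (∀ x : A, Tendsto (fun n : ℕ => τ^[n] x) atTop (nhds (φ₀ x • 1)))
      ↔
    -- ergodicity and trivial peripheral point spectrum
    ((∀ x : A, τ x = x → ∃ c : ℂ, x = c • 1) ∧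
      (∀ w : ℂ, ‖w‖ = 1 → (∃ x : A, x ≠ 0 ∧ τ x = w • x) → w = 1)) :=
  mixing_iff_ergodic_and_trivial_peripheral_spectrum_general τ hτKS φ₀ hφpos hφ1 hfaithful hinv
end

section
/- Let π be a representation of the Cuntz algebra O_d on a Hilbert space, Sᵢ = π(sᵢ), and Λ(X) = ∑ᵢ SᵢXSᵢ* the induced endomorphism of M = π(O_d)''. Then ⋂ₙ≥₁ Λⁿ(M) = M ∩ π(UHF_d)′, where UHF_d ⊆ O_d is the fixed-point algebra of the gauge action (generated by monomials s_I s_J* with |I| = |J|). -/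
set_option maxHeartbeats 1000000

namespace CuntzAux

variable {H : Type*} [NormedAddCommGroup H] [InnerProductSpace ℂ H] [CompleteSpace H]
variable {d : ℕ}

/-- `S_I` for a multi-index `I`. -/
noncomputable def T (S : Fin d → H →L[ℂ] H) {n : ℕ} (I : Fin n → Fin d) : H →L[ℂ] H :=
  (List.ofFn fun k => S (I k)).prod

lemma T_zero (S : Fin d → H →L[ℂ] H) (I : Fin 0 → Fin d) : T S I = 1 := by
  simp [T]

lemma T_cons (S : Fin d → H →L[ℂ] H) {n : ℕ} (i : Fin d) (I : Fin n → Fin d) :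
    T S (Fin.cons i I) = S i * T S I := by
  simp [T, List.ofFn_succ]

lemma T_mem (S : Fin d → H →L[ℂ] H) (M : VonNeumannAlgebra H) (hSM : ∀ i, S i ∈ M)
    {n : ℕ} (I : Fin n → Fin d) : T S I ∈ M := by
  induction n with
  | zero => simpa [T_zero] using one_mem M
  | succ m ih =>
    rw [← Fin.cons_self_tail I, T_cons]
    exact mul_mem (hSM _) (ih _)

lemma sum_pi_cons {E : Type*} [AddCommMonoid E] {n : ℕ}
    (f : (Fin (n + 1) → Fin d) → E) :
    ∑ I, f I = ∑ i : Fin d, ∑ J : Fin n → Fin d, f (Fin.cons i J) := by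
  rw [← ((Fin.consEquiv fun _ => Fin d).sum_comp f), Fintype.sum_prod_type]
  rfl

lemma star_T_mul_T (S : Fin d → H →L[ℂ] H)
    (hrel₁ : ∀ i j : Fin d, star (S i) * S j = if i = j then 1 else 0)
    {n : ℕ} (I J : Fin n → Fin d) :
    star (T S I) * T S J = if I = J then 1 else 0 := by
  induction n with
  | zero =>
    simp [T_zero, Subsingleton.elim I J]
  | succ m ih =>
    rw [← Fin.cons_self_tail I, ← Fin.cons_self_tail J, T_cons, T_cons]
    have : star (S (I 0) * T S (Fin.tail I)) * (S (J 0) * T S (Fin.tail J))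
        = star (T S (Fin.tail I)) * (star (S (I 0)) * S (J 0)) * T S (Fin.tail J) := by
      simp [star_mul, mul_assoc]
    rw [this, hrel₁]
    by_cases h0 : I 0 = J 0
    · rw [if_pos h0]
      rw [mul_one, ih]
      by_cases ht : Fin.tail I = Fin.tail J
      · rw [if_pos ht, if_pos (by rw [h0, ht])]
      · rw [if_neg ht, if_neg (by
          intro h
          exact ht (by
            have := congrArg Fin.tail h
            simpa using this))]
    · rw [if_neg h0, mul_zero, zero_mul, if_neg (by
        intro h
        exact h0 (by
          have := congrArg (fun f => f 0) h
          simpa using this))]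

lemma sum_T_mul_star_T (S : Fin d → H →L[ℂ] H)
    (hrel₂ : ∑ i : Fin d, S i * star (S i) = 1)
    (n : ℕ) :
    ∑ I : Fin n → Fin d, T S I * star (T S I) = 1 := by
  induction n with
  | zero => simp [T_zero]
  | succ m ih =>
    rw [sum_pi_cons (fun I => T S I * star (T S I))]
    have : ∀ i : Fin d, ∑ J : Fin m → Fin d,
        T S (Fin.cons i J) * star (T S (Fin.cons i J)) = S i * star (S i) := by
      intro i
      have : ∀ J : Fin m → Fin d,
          T S (Fin.cons i J) * star (T S (Fin.cons i J))
            = S i * (T S J * star (T S J)) * star (S i) := by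
        intro J
        rw [T_cons]
        simp [star_mul, mul_assoc]
      rw [Finset.sum_congr rfl fun J _ => this J]
      rw [← Finset.sum_mul, ← Finset.mul_sum, ih, mul_one]
    rw [Finset.sum_congr rfl fun i _ => this i, hrel₂]

/-- The iterate formula `Λⁿ(X) = ∑_I S_I X S_I*`. -/
lemma iterate_formula (S : Fin d → H →L[ℂ] H) (n : ℕ) (X : H →L[ℂ] H) :
    (fun X : H →L[ℂ] H => ∑ i : Fin d, S i * X * star (S i))^[n] X
      = ∑ I : Fin n → Fin d, T S I * X * star (T S I) := by
  induction n generalizing X with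
  | zero => simp [T_zero]
  | succ m ih =>
    rw [Function.iterate_succ_apply', ih, sum_pi_cons
      (fun I => T S I * X * star (T S I))]
    refine Finset.sum_congr rfl fun i _ => ?_
    rw [Finset.mul_sum, Finset.sum_mul]
    refine Finset.sum_congr rfl fun J _ => ?_
    rw [T_cons]
    simp [star_mul, mul_assoc]

end CuntzAux

open CuntzAux in
/-- for a representation of `O_d` with `M = π(O_d)''` and
`Λ(X) = ∑ᵢ SᵢXSᵢ*`, one has `⋂ₙ Λⁿ(M) = M ∩ π(UHF_d)'`, where `π(UHF_d)'` is the
commutant of the algebra generated by the monomials `S_I S_J*` with `|I| = |J|`. -/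
theorem intersection_of_images_eq_relative_commutant
    {H : Type*} [NormedAddCommGroup H] [InnerProductSpace ℂ H] [CompleteSpace H]
    {d : ℕ} (hd : 2 ≤ d) (S : Fin d → H →L[ℂ] H)
    (hrel₁ : ∀ i j : Fin d, star (S i) * S j = if i = j then 1 else 0)
    (hrel₂ : ∑ i : Fin d, S i * star (S i) = 1)
    (M : VonNeumannAlgebra H)
    (hSM : ∀ i, S i ∈ M)
    -- `M` is the von Neumann algebra generated by the `Sᵢ`:
    (hmin : ∀ N : VonNeumannAlgebra H, (∀ i, S i ∈ N) → ∀ x ∈ M, x ∈ N) :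
    (⋂ n : ℕ,
        (fun X : H →L[ℂ] H => ∑ i : Fin d, S i * X * star (S i))^[n + 1] ''
          (M : Set (H →L[ℂ] H)))
      =
    (M : Set (H →L[ℂ] H)) ∩
      {X : H →L[ℂ] H | ∀ (n : ℕ) (I J : Fin n → Fin d),
        Commute X ((List.ofFn fun k => S (I k)).prod *
          star (List.ofFn fun k => S (J k)).prod)} := by
  have hT : ∀ {n : ℕ} (I : Fin n → Fin d),
      (List.ofFn fun k => S (I k)).prod = T S I := fun _ => rfl
  ext X
  simp only [Set.mem_iInter, Set.mem_image, Set.mem_inter_iff, Set.mem_setOf_eq]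
  constructor
  · intro hX
    constructor
    · obtain ⟨Y, hYM, hYX⟩ := hX 0
      rw [iterate_formula] at hYX
      rw [← hYX]
      exact sum_mem fun I _ =>
        mul_mem (mul_mem (T_mem S M hSM I) hYM) (star_mem (T_mem S M hSM I))
    · intro n I J
      rw [hT, hT]
      match n, I, J with
      | 0, I, J => simp [T_zero, Commute, SemiconjBy]
      | (m + 1), I, J =>
        obtain ⟨Y, hYM, hYX⟩ := hX m
        rw [iterate_formula] at hYX
        have h1 : X * (T S I * star (T S J)) = T S I * (Y * star (T S J)) := by
          rw [← hYX, Finset.sum_mul]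
          rw [Finset.sum_congr rfl (fun K _ => show
              T S K * Y * star (T S K) * (T S I * star (T S J))
                = if K = I then T S K * (Y * star (T S J)) else 0 from ?_)]
          · rw [Finset.sum_ite_eq' Finset.univ I (fun K => T S K * (Y * star (T S J))),
              if_pos (Finset.mem_univ I)]
          · have : T S K * Y * star (T S K) * (T S I * star (T S J))
                = T S K * (Y * ((star (T S K) * T S I) * star (T S J))) := by
              simp only [mul_assoc]
            rw [this, star_T_mul_T S hrel₁]
            split_ifs with h
            · rw [one_mul]
            · simp
        have h2 : (T S I * star (T S J)) * X = T S I * (Y * star (T S J)) := by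
          rw [← hYX, Finset.mul_sum]
          rw [Finset.sum_congr rfl (fun K _ => show
              T S I * star (T S J) * (T S K * Y * star (T S K))
                = if J = K then T S I * (Y * star (T S K)) else 0 from ?_)]
          · rw [Finset.sum_ite_eq Finset.univ J (fun K => T S I * (Y * star (T S K))),
              if_pos (Finset.mem_univ J)]
          · have : T S I * star (T S J) * (T S K * Y * star (T S K))
                = T S I * ((star (T S J) * T S K) * (Y * star (T S K))) := by
              simp only [mul_assoc]
            rw [this, star_T_mul_T S hrel₁]
            split_ifs with h
            · rw [one_mul]
            · simp
        exact h1.trans h2.symm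
  · rintro ⟨hXM, hXc⟩ n
    have hone : ∀ (K : Fin (n + 1) → Fin d), star (T S K) * T S K = 1 := by
      intro K
      rw [star_T_mul_T S hrel₁ K K, if_pos rfl]
    set I₀ : Fin (n + 1) → Fin d := fun _ => ⟨0, by omega⟩ with hI₀
    refine ⟨star (T S I₀) * X * T S I₀,
      mul_mem (mul_mem (star_mem (T_mem S M hSM I₀)) hXM) (T_mem S M hSM I₀), ?_⟩
    rw [iterate_formula]
    have hind : ∀ K : Fin (n + 1) → Fin d,
        star (T S I₀) * X * T S I₀ = star (T S K) * X * T S K := by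
      intro K
      have hc : X * (T S K * star (T S I₀)) = (T S K * star (T S I₀)) * X := by
        have := (hXc (n + 1) K I₀).eq
        simp only [hT] at this
        exact this
      symm
      calc star (T S K) * X * T S K
          = star (T S K) * X * T S K * (star (T S I₀) * T S I₀) := by
            rw [hone I₀, mul_one]
        _ = star (T S K) * (X * (T S K * star (T S I₀))) * T S I₀ := by
            simp only [mul_assoc]
        _ = star (T S K) * ((T S K * star (T S I₀)) * X) * T S I₀ := by rw [hc]
        _ = (star (T S K) * T S K) * (star (T S I₀) * (X * T S I₀)) := by
            simp only [mul_assoc]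
        _ = star (T S I₀) * X * T S I₀ := by
            rw [hone K, one_mul, mul_assoc]
    rw [Finset.sum_congr rfl (fun K _ => show
        T S K * (star (T S I₀) * X * T S I₀) * star (T S K)
          = X * (T S K * star (T S K)) from ?_)]
    · rw [← Finset.mul_sum, sum_T_mul_star_T S hrel₂, mul_one]
    · rw [hind K]
      have hc : X * (T S K * star (T S K)) = (T S K * star (T S K)) * X := by
        have := (hXc (n + 1) K K).eq
        simp only [hT] at this
        exact this
      calc T S K * (star (T S K) * X * T S K) * star (T S K)
          = T S K * star (T S K) * (X * (T S K * star (T S K))) := by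
            simp only [mul_assoc]
        _ = T S K * star (T S K) * ((T S K * star (T S K)) * X) := by rw [hc]
        _ = T S K * ((star (T S K) * T S K) * (star (T S K) * X)) := by
            simp only [mul_assoc]
        _ = X * (T S K * star (T S K)) := by
            rw [hone K, one_mul, hc]
            simp only [mul_assoc]
end

section
/- Let π be a representation of O_d with a vector state ψ_Ω invariant under the canonical endomorphism Λ(X) = ∑ₖ SₖXSₖ*, and let Q be the support projection of ψ_Ω in π(UHF_d)''. Then Λ(Q) ≥ Q, and consequently (1 − Q) Sₖ* Q = 0 for all 1 ≤ k ≤ d. -/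
open Finset

section Conjugation

variable {A : Type*} [Ring A] [StarRing A] {ι : Type*} [Fintype ι] {S : ι → A}

theorem IsStarProjection.sum_mul_mul_star [DecidableEq ι]
    (hS : ∀ i j, star (S i) * S j = if i = j then 1 else 0) {p : A} (hp : IsStarProjection p) :
    IsStarProjection (∑ i, S i * p * star (S i)) := by
  refine ⟨?_, ?_⟩
  · have hterm : ∀ i j, S i * p * star (S i) * (S j * p * star (S j)) =
        if i = j then S i * p * star (S i) else 0 := by
      intro i j
      rw [show S i * p * star (S i) * (S j * p * star (S j)) =
          S i * (p * (star (S i) * S j) * p) * star (S j) by noncomm_ring, hS]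
      split_ifs with hij
      · rw [hij, mul_one, hp.isIdempotentElem.eq]
      · simp
    simp [IsIdempotentElem, sum_mul_sum, hterm]
  · simp [IsSelfAdjoint, star_sum, star_mul, hp.isSelfAdjoint.star_eq, mul_assoc]

theorem sum_mul_one_sub_mul_star (hS : ∑ i, S i * star (S i) = 1) (p : A) :
    ∑ i, S i * (1 - p) * star (S i) = 1 - ∑ i, S i * p * star (S i) := by
  simp [mul_sub, sub_mul, sum_sub_distrib, hS]

theorem mul_sum_mul_star_mul_eq_sum {p : A} (hp : IsStarProjection p) (q : A) :
    q * (∑ i, S i * p * star (S i)) * star q = ∑ i, q * S i * p * star (q * S i * p) := by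
  simp only [mul_sum, sum_mul, star_mul, hp.isSelfAdjoint.star_eq]
  refine sum_congr rfl fun i _ => ?_
  rw [show q * S i * p * (p * (star (S i) * star q)) = q * S i * (p * p) * star (S i) * star q by
    noncomm_ring, hp.isIdempotentElem.eq]
  noncomm_ring

end Conjugation

theorem eq_zero_of_sum_mul_star_self_eq_zero {A : Type*} [NonUnitalNormedRing A] [StarRing A]
    [CStarRing A] [PartialOrder A] [StarOrderedRing A] {ι : Type*} [Fintype ι] {x : ι → A}
    (h : ∑ i, x i * star (x i) = 0) (i : ι) : x i = 0 :=
  (CStarRing.mul_star_self_eq_zero_iff _).mp <|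
    (sum_eq_zero_iff_of_nonneg fun j _ => mul_star_self_nonneg (x j)).mp h i (mem_univ i)

theorem IsStarProjection.apply_eq_self_of_inner_eq {𝕜 H : Type*} [RCLike 𝕜]
    [NormedAddCommGroup H] [InnerProductSpace 𝕜 H] [CompleteSpace H] {P : H →L[𝕜] H}
    (hP : IsStarProjection P) {x : H} (h : inner 𝕜 x (P x) = inner 𝕜 x x) : P x = x := by
  have hE : IsStarProjection (1 - P) := hP.one_sub
  have hEE : (1 - P) ((1 - P) x) = (1 - P) x :=
    congrArg (fun T : H →L[𝕜] H => T x) hE.isIdempotentElem.eq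
  have hinner : inner 𝕜 ((1 - P) x) ((1 - P) x) = inner 𝕜 x ((1 - P) x) := by
    rw [← ContinuousLinearMap.adjoint_inner_right, ← ContinuousLinearMap.star_eq_adjoint,
      hE.isSelfAdjoint.star_eq, hEE]
  have hEx : (1 - P) x = 0 := by
    rw [← inner_self_eq_zero (𝕜 := 𝕜), hinner]
    simp [inner_sub_right, h]
  exact (sub_eq_zero.mp hEx).symm

theorem support_projection_subharmonic_cuntz_general
    {H : Type*} [NormedAddCommGroup H] [InnerProductSpace ℂ H] [CompleteSpace H]
    {d : ℕ} (S : Fin d → H →L[ℂ] H)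
    (hrel₁ : ∀ i j : Fin d, star (S i) * S j = if i = j then 1 else 0)
    (hrel₂ : ∑ i : Fin d, S i * star (S i) = 1)
    (Ω : H)
    (N : VonNeumannAlgebra H)
    -- `N` (playing the role of `π(UHF_d)''`) is invariant under `Λ(X) = ∑ᵢ SᵢXSᵢ*`:
    (hΛN : ∀ X ∈ N, (∑ i : Fin d, S i * X * star (S i)) ∈ N)
    -- the vector state `ψ_Ω` is `Λ`-invariant on `N`:
    (hinv : ∀ X ∈ N, (inner ℂ Ω ((∑ i : Fin d, S i * X * star (S i)) Ω) : ℂ)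
        = (inner ℂ Ω (X Ω) : ℂ))
    -- `Q` is the support projection of `ψ_Ω` in `N`:
    (Q : H →L[ℂ] H) (hQN : Q ∈ N)
    (hQ : IsIdempotentElem Q) (hQsa : IsSelfAdjoint Q) (hQΩ : Q Ω = Ω)
    (hQmin : ∀ e ∈ N, IsIdempotentElem e → IsSelfAdjoint e → e Ω = Ω → Q ≤ e) :
    Q ≤ ∑ i : Fin d, S i * Q * star (S i) ∧
    ∀ k : Fin d, ((1 : H →L[ℂ] H) - Q) * star (S k) * Q = 0 := by
  have hQproj : IsStarProjection Q := ⟨hQ, hQsa⟩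
  have hΛQ := hQproj.sum_mul_mul_star hrel₁
  have hΛQΩ : (∑ i, S i * Q * star (S i)) Ω = Ω :=
    hΛQ.apply_eq_self_of_inner_eq (by rw [hinv Q hQN, hQΩ])
  have hle : Q ≤ ∑ i, S i * Q * star (S i) :=
    hQmin _ (hΛN Q hQN) hΛQ.isIdempotentElem hΛQ.isSelfAdjoint hΛQΩ
  refine ⟨hle, fun k => ?_⟩
  have hΛQ_mul : (∑ i, S i * Q * star (S i)) * Q = Q :=
    (hQproj.le_iff_mul_eq_right hΛQ).mp hle
  -- `Q Λ(1 - Q) Q = Q - Q Λ(Q) Q = 0`, and it is `∑ xᵢ xᵢ*` with `xᵢ = Q Sᵢ (1 - Q)`.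
  have hsum : ∑ i, Q * S i * (1 - Q) * star (Q * S i * (1 - Q)) = 0 := by
    rw [← mul_sum_mul_star_mul_eq_sum hQproj.one_sub, sum_mul_one_sub_mul_star hrel₂,
      hQsa.star_eq, mul_sub, mul_one, sub_mul, mul_assoc Q, hΛQ_mul, sub_self]
  simpa [star_mul, hQsa.star_eq, mul_assoc] using
    congrArg star (eq_zero_of_sum_mul_star_self_eq_zero hsum k)

/-- the support projection `Q` of a `Λ`-invariant vector state is
sub-harmonic, `Λ(Q) ≥ Q`, and consequently `(1 − Q) Sₖ* Q = 0` for all `k`. -/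
theorem support_projection_subharmonic_cuntz
    {H : Type*} [NormedAddCommGroup H] [InnerProductSpace ℂ H] [CompleteSpace H]
    {d : ℕ} (hd : 2 ≤ d) (S : Fin d → H →L[ℂ] H)
    (hrel₁ : ∀ i j : Fin d, star (S i) * S j = if i = j then 1 else 0)
    (hrel₂ : ∑ i : Fin d, S i * star (S i) = 1)
    (Ω : H) (hΩ : ‖Ω‖ = 1)
    (N : VonNeumannAlgebra H)
    -- `N` (playing the role of `π(UHF_d)''`) is invariant under `Λ(X) = ∑ᵢ SᵢXSᵢ*`:
    (hΛN : ∀ X ∈ N, (∑ i : Fin d, S i * X * star (S i)) ∈ N)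
    -- the vector state `ψ_Ω` is `Λ`-invariant on `N`:
    (hinv : ∀ X ∈ N, (inner ℂ Ω ((∑ i : Fin d, S i * X * star (S i)) Ω) : ℂ)
        = (inner ℂ Ω (X Ω) : ℂ))
    -- `Q` is the support projection of `ψ_Ω` in `N`:
    (Q : H →L[ℂ] H) (hQN : Q ∈ N)
    (hQ : IsIdempotentElem Q) (hQsa : IsSelfAdjoint Q) (hQΩ : Q Ω = Ω)
    (hQmin : ∀ e ∈ N, IsIdempotentElem e → IsSelfAdjoint e → e Ω = Ω → Q ≤ e) :
    Q ≤ ∑ i : Fin d, S i * Q * star (S i) ∧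
    ∀ k : Fin d, ((1 : H →L[ℂ] H) - Q) * star (S k) * Q = 0 :=
  support_projection_subharmonic_cuntz_general S hrel₁ hrel₂ Ω N hΛN hinv Q hQN hQ hQsa hQΩ hQmin
end

section
/- Let (τₜ) be a semigroup of unital positive maps on a von Neumann algebra A₀ with normal invariant state φ₀, and let p be a sub-harmonic projection with s-limₜ τₜ(p) = 1. If ‖φᵖ∘τᵖₜ − φ₀ᵖ‖ → 0 as t → ∞ for every normal state φᵖ on the corner pA₀p (reduced dynamics), then ‖φ∘τₜ − φ₀‖ → 0 for every normal state φ on A₀. -/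
open ComplexOrder Filter

variable {A : Type*} [NormedRing A] [StarRing A] [CStarRing A]
  [NormedAlgebra ℂ A] [StarModule ℂ A] [CompleteSpace A]
  [PartialOrder A] [StarOrderedRing A]

/-- Compression to the corner: `x ↦ p * x * p`, as a continuous linear map. -/
noncomputable def cornerCompression (p : A) : A →L[ℂ] A :=
  (ContinuousLinearMap.mul ℂ A p).comp ((ContinuousLinearMap.mul ℂ A).flip p)

/-!
Write `q = 1 - p`. By the Cauchy–Schwarz inequality `|ψ(q x)|² ≤ ψ(q) ψ(x⋆x)`, a state `ψ`
with `ψ(q) ≤ δ²` is within `2δ` in norm of its compression `x ↦ ψ(p x p)`. Sub-harmonicity gives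
`τₜ(q) ≤ q`, so once `φ(τₛ q) ≤ δ²` the state `ψ = φ ∘ τₛ` and all of its translates `ψ ∘ τₜ`
have this property. Up to `O(δ)`, `φ ∘ τₛ₊ₜ = ψ ∘ τₜ` is then the normalised corner state of `ψ`
evolved by the reduced dynamics, which tends to `φ₀` on the corner; and `φ₀` lives on the corner,
since `φ₀(p) = lim φ₀(τₜ p) = 1`.
-/

namespace PositiveLinearMap

section Functional

variable {B : Type*} [CStarAlgebra B] [PartialOrder B] [StarOrderedRing B] (f : B →ₚ[ℂ] ℂ)

lemma norm_apply_star_mul_sq_le (a b : B) :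
    ‖f (star a * b)‖ ^ 2 ≤ ‖f (star a * a)‖ * ‖f (star b * b)‖ := by
  have hnorm (c : B) : ‖f (star c * c)‖ = ‖f.toPreGNS c‖ ^ 2 := by
    rw [show f (star c * c) = _ from (f.preGNS_norm_sq (f.toPreGNS c)).symm]
    simp
  rw [hnorm, hnorm, ← mul_pow,
    show f (star a * b) = inner ℂ (f.toPreGNS a) (f.toPreGNS b) from rfl]
  gcongr
  exact norm_inner_le_norm _ _

lemma norm_apply_projection_mul_le (hf1 : ‖f 1‖ ≤ 1) {δ : ℝ} (hδ : 0 ≤ δ) {q : B}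
    (hq : IsStarProjection q) (hfq : ‖f q‖ ≤ δ ^ 2) (b : B) : ‖f (q * b)‖ ≤ δ * ‖b‖ := by
  have hb : ‖f (star b * b)‖ ≤ ‖b‖ ^ 2 := by
    have h := f.norm_apply_le_of_nonneg _ (star_mul_self_nonneg b)
    rw [CStarRing.norm_star_mul_self, ← sq] at h
    exact h.trans (mul_le_of_le_one_left (by positivity) hf1)
  have h := f.norm_apply_star_mul_sq_le q b
  rw [hq.isSelfAdjoint.star_eq, hq.isIdempotentElem.eq] at h
  refine le_of_pow_le_pow_left₀ two_ne_zero (by positivity) (h.trans ?_)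
  rw [mul_pow]
  gcongr

lemma norm_sub_apply_corner_le (hf1 : ‖f 1‖ ≤ 1) {δ : ℝ} (hδ : 0 ≤ δ) {p : B}
    (hp : IsStarProjection p) (hfq : ‖f (1 - p)‖ ≤ δ ^ 2) (x : B) :
    ‖f x - f (p * x * p)‖ ≤ 2 * δ * ‖x‖ := by
  have hsplit : x - p * x * p = (1 - p) * x + star ((1 - p) * (star x * p)) := by
    rw [star_mul, star_mul, star_star, hp.isSelfAdjoint.star_eq, star_sub, star_one,
      hp.isSelfAdjoint.star_eq]
    noncomm_ring
  have hxp : ‖star x * p‖ ≤ ‖x‖ := by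
    simpa using norm_mul_le_of_le (le_refl ‖star x‖) (hp.norm_le p)
  rw [← map_sub, hsplit, map_add, map_star]
  calc ‖f ((1 - p) * x) + star (f ((1 - p) * (star x * p)))‖
      ≤ δ * ‖x‖ + δ * ‖x‖ := by
        refine (norm_add_le _ _).trans (add_le_add ?_ ?_)
        · exact f.norm_apply_projection_mul_le hf1 hδ hp.one_sub hfq x
        · rw [norm_star]
          exact (f.norm_apply_projection_mul_le hf1 hδ hp.one_sub hfq _).trans (by gcongr)
    _ = 2 * δ * ‖x‖ := by ring

end Functional

variable {B₁ B₂ : Type*} [CStarAlgebra B₁] [PartialOrder B₁] [StarOrderedRing B₁]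
  [CStarAlgebra B₂] [PartialOrder B₂] [StarOrderedRing B₂]

lemma norm_apply_le (f : B₁ →ₚ[ℂ] B₂) (x : B₁) : ‖f x‖ ≤ 4 * ‖f 1‖ * ‖x‖ := by
  obtain ⟨y, hy_nonneg, hy_norm, rfl⟩ := CStarAlgebra.exists_sum_four_nonneg x
  simp only [map_sum, map_smul]
  refine (norm_sum_le _ _).trans ?_
  simp only [norm_smul, norm_pow, Complex.norm_I, one_pow, one_mul]
  refine (Finset.sum_le_sum fun i _ => (f.norm_apply_le_of_nonneg _ (hy_nonneg i)).trans
    (mul_le_mul_of_nonneg_left (hy_norm i) (norm_nonneg _))).trans ?_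
  simp [mul_assoc]

end PositiveLinearMap

section CornerCompression

variable {B : Type*} [NormedRing B] [NormedAlgebra ℂ B]

@[simp]
lemma cornerCompression_apply (p x : B) : cornerCompression p x = p * x * p := by
  simp [cornerCompression, mul_assoc]

lemma cornerCompression_nonneg [PartialOrder B] [StarRing B] [StarOrderedRing B] {p : B}
    (hp : IsSelfAdjoint p) {x : B} (hx : 0 ≤ x) : 0 ≤ cornerCompression p x := by
  simpa using hp.conjugate_nonneg hx

lemma cornerCompression_comp_self {p : B} (hp : IsIdempotentElem p) :
    (cornerCompression p).comp (cornerCompression p) = cornerCompression p := by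
  ext x
  simp only [ContinuousLinearMap.comp_apply, cornerCompression_apply, ← mul_assoc, hp.eq]
  rw [mul_assoc _ p p, hp.eq]

lemma norm_cornerCompression_le {p : B} (hp : ‖p‖ ≤ 1) : ‖cornerCompression p‖ ≤ 1 :=
  ContinuousLinearMap.opNorm_le_bound _ zero_le_one fun x => by
    rw [cornerCompression_apply, one_mul]
    calc ‖p * x * p‖ ≤ ‖p‖ * ‖x‖ * ‖p‖ := norm_mul₃_le
      _ ≤ 1 * ‖x‖ * 1 := by gcongr
      _ = ‖x‖ := by ring

end CornerCompression

namespace ContinuousLinearMap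

section CStarAlgebra

variable {B : Type*} [CStarAlgebra B] [PartialOrder B] [StarOrderedRing B]

lemma norm_le_four_mul_norm_apply_one {B' : Type*} [CStarAlgebra B'] [PartialOrder B']
    [StarOrderedRing B'] (T : B →L[ℂ] B') (hT : ∀ x, 0 ≤ x → 0 ≤ T x) : ‖T‖ ≤ 4 * ‖T 1‖ :=
  opNorm_le_bound _ (by positivity) (PositiveLinearMap.mk₀ T.toLinearMap hT).norm_apply_le

lemma norm_sub_comp_cornerCompression_le (f : B →L[ℂ] ℂ) (hf : ∀ x, 0 ≤ x → 0 ≤ f x)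
    (hf1 : f 1 = 1) {p : B} (hp : IsStarProjection p) {δ : ℝ} (hδ : 0 ≤ δ)
    (hfq : ‖f (1 - p)‖ ≤ δ ^ 2) : ‖f - f.comp (cornerCompression p)‖ ≤ 2 * δ :=
  opNorm_le_bound _ (by positivity) fun x => by
    rw [sub_apply, comp_apply, cornerCompression_apply]
    exact (PositiveLinearMap.mk₀ f.toLinearMap hf).norm_sub_apply_corner_le
      (by change ‖f 1‖ ≤ 1; simp [hf1]) hδ hp hfq x

lemma comp_cornerCompression_eq_self (f : B →L[ℂ] ℂ) (hf : ∀ x, 0 ≤ x → 0 ≤ f x)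
    (hf1 : f 1 = 1) {p : B} (hp : IsStarProjection p) (hfp : f p = 1) :
    f.comp (cornerCompression p) = f := by
  have h := f.norm_sub_comp_cornerCompression_le hf hf1 hp le_rfl (by simp [hf1, hfp])
  rw [mul_zero, norm_le_zero_iff, sub_eq_zero] at h
  exact h.symm

lemma norm_apply_map_one_sub_le (ψ : B →L[ℂ] ℂ) (hψ : ∀ x, 0 ≤ x → 0 ≤ ψ x) {T : B →L[ℂ] B}
    (hT : ∀ x, 0 ≤ x → 0 ≤ T x) (hT1 : T 1 = 1) {p : B} (hp : IsStarProjection p)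
    (hpT : p ≤ T p) : ‖ψ (T (1 - p))‖ ≤ ‖ψ (1 - p)‖ := by
  have hTq : T (1 - p) ≤ 1 - p := by
    rw [map_sub, hT1]
    exact sub_le_sub_left hpT 1
  refine CStarAlgebra.norm_le_norm_of_nonneg_of_le (hψ _ (hT _ hp.one_sub_nonneg))
    (sub_nonneg.1 ?_)
  rw [← map_sub]
  exact hψ _ (sub_nonneg.2 hTq)

end CStarAlgebra

section CornerState

variable {B : Type*} [NormedRing B] [NormedAlgebra ℂ B]

/-- The reduced state `ψᵖ` of the paper, pulled back to `B` along `x ↦ p x p`. It is a state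
only when `ψ p ≠ 0`; otherwise `(ψ p)⁻¹ = 0` and it vanishes. -/
noncomputable def cornerState (ψ : B →L[ℂ] ℂ) (p : B) : B →L[ℂ] ℂ :=
  (ψ p)⁻¹ • ψ.comp (cornerCompression p)

variable (ψ : B →L[ℂ] ℂ) {p : B}

lemma cornerState_nonneg [PartialOrder B] [StarRing B] [StarOrderedRing B]
    (hψ : ∀ x, 0 ≤ x → 0 ≤ ψ x) (hp : IsStarProjection p) (x : B) (hx : 0 ≤ x) :
    0 ≤ cornerState ψ p x :=
  mul_nonneg (inv_nonneg_of_nonneg (hψ p hp.nonneg))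
    (hψ _ (cornerCompression_nonneg hp.isSelfAdjoint hx))

lemma cornerState_apply_self (hp : IsIdempotentElem p) (hψp : ψ p ≠ 0) :
    cornerState ψ p p = 1 := by
  simp [cornerState, hp.eq, hψp]

lemma cornerState_apply_cornerCompression (hp : IsIdempotentElem p) (x : B) :
    cornerState ψ p x = cornerState ψ p (p * x * p) := by
  simp only [cornerState, smul_apply, comp_apply, ← cornerCompression_apply p x]
  rw [← comp_apply (cornerCompression p), cornerCompression_comp_self hp]

lemma apply_ne_zero_of_norm_apply_one_sub_lt (hψ1 : ψ 1 = 1) (h : ‖ψ (1 - p)‖ < 1) :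
    ψ p ≠ 0 := fun hψp => by
  simp [hψ1, hψp] at h

lemma smul_cornerState (hψp : ψ p ≠ 0) :
    ψ p • cornerState ψ p = ψ.comp (cornerCompression p) :=
  smul_inv_smul₀ hψp _

lemma comp_sub_eq_of_cornerCompression (T : B →L[ℂ] B) {φ₀ : B →L[ℂ] ℂ}
    (hp : IsIdempotentElem p) (hψp : ψ p ≠ 0) (hφ₀p : φ₀.comp (cornerCompression p) = φ₀) :
    ψ.comp T - φ₀ = (ψ.comp T - (ψ.comp T).comp (cornerCompression p)) +
      (ψ - ψ.comp (cornerCompression p)).comp (T.comp (cornerCompression p)) +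
      ψ p • ((cornerState ψ p).comp ((cornerCompression p).comp (T.comp (cornerCompression p))) -
        φ₀.comp (cornerCompression p)) + (ψ p - 1) • φ₀ := by
  set C := cornerCompression p
  have hψC : (ψ p • cornerState ψ p).comp (C.comp (T.comp C)) = (ψ.comp C).comp (T.comp C) := by
    rw [smul_cornerState ψ hψp, comp_assoc, ← comp_assoc C C, cornerCompression_comp_self hp,
      comp_assoc]
  rw [smul_sub, ← smul_comp, hψC, hφ₀p, sub_comp, comp_assoc ψ T C]
  module

end CornerState

end ContinuousLinearMap

open ContinuousLinearMap in
lemma norm_comp_sub_le_cornerState {B : Type*} [CStarAlgebra B] [PartialOrder B]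
    [StarOrderedRing B] {T : B →L[ℂ] B} (hT : ∀ x, 0 ≤ x → 0 ≤ T x) (hT1 : T 1 = 1)
    {ψ φ₀ : B →L[ℂ] ℂ} (hψ : ∀ x, 0 ≤ x → 0 ≤ ψ x) (hψ1 : ψ 1 = 1)
    (hφ₀ : ∀ x, 0 ≤ x → 0 ≤ φ₀ x) (hφ₀1 : φ₀ 1 = 1) {p : B} (hp : IsStarProjection p)
    (hφ₀p : φ₀.comp (cornerCompression p) = φ₀) {δ : ℝ} (hδ : 0 ≤ δ) (hδ1 : δ < 1)
    (hψq : ‖ψ (1 - p)‖ ≤ δ ^ 2) (hψTq : ‖ψ (T (1 - p))‖ ≤ δ ^ 2) :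
    ‖ψ.comp T - φ₀‖ ≤ 14 * δ + ‖(cornerState ψ p).comp ((cornerCompression p).comp
      (T.comp (cornerCompression p))) - φ₀.comp (cornerCompression p)‖ := by
  set C := cornerCompression p
  set F := (cornerState ψ p).comp (C.comp (T.comp C)) - φ₀.comp C
  have : Nontrivial B := ⟨1, 0, fun h => by simp [h] at hφ₀1⟩
  have hψp1 : ‖ψ p - 1‖ ≤ δ ^ 2 := by rwa [← norm_neg, neg_sub, ← hψ1, ← map_sub]
  have hψp0 : ψ p ≠ 0 :=
    ψ.apply_ne_zero_of_norm_apply_one_sub_lt hψ1 (hψq.trans_lt (by nlinarith))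
  have hψp : ‖ψ p‖ ≤ 1 := by
    have h := (PositiveLinearMap.mk₀ ψ.toLinearMap hψ).norm_apply_le_of_nonneg p hp.nonneg
    change ‖ψ p‖ ≤ ‖ψ 1‖ * ‖p‖ at h
    simpa [hψ1] using h.trans (mul_le_of_le_one_right (norm_nonneg _) (hp.norm_le p))
  have hTC : ‖T.comp C‖ ≤ 4 := by
    refine (opNorm_comp_le T C).trans ?_
    have hT4 : ‖T‖ ≤ 4 := by simpa [hT1] using T.norm_le_four_mul_norm_apply_one hT
    nlinarith [norm_cornerCompression_le (hp.norm_le p), norm_nonneg T, norm_nonneg C]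
  have hφ₀4 : ‖φ₀‖ ≤ 4 := by simpa [hφ₀1] using φ₀.norm_le_four_mul_norm_apply_one hφ₀
  calc ‖ψ.comp T - φ₀‖
      ≤ ‖ψ.comp T - (ψ.comp T).comp C‖ + ‖(ψ - ψ.comp C).comp (T.comp C)‖ + ‖ψ p • F‖ +
          ‖(ψ p - 1) • φ₀‖ := by
            rw [ψ.comp_sub_eq_of_cornerCompression T hp.isIdempotentElem hψp0 hφ₀p]
            exact norm_add₄_le
    _ ≤ 2 * δ + 2 * δ * 4 + 1 * ‖F‖ + δ ^ 2 * 4 := by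
        gcongr
        · exact (ψ.comp T).norm_sub_comp_cornerCompression_le (fun x hx => hψ _ (hT x hx))
            (by simp [hT1, hψ1]) hp hδ hψTq
        · exact (opNorm_comp_le _ _).trans (mul_le_mul
            (ψ.norm_sub_comp_cornerCompression_le hψ hψ1 hp hδ hψq) hTC (norm_nonneg _)
            (by positivity))
        · rw [norm_smul]; gcongr
        · rw [norm_smul]; gcongr
    _ ≤ 14 * δ + ‖F‖ := by nlinarith

lemma eventually_norm_comp_sub_lt {B : Type*} [CStarAlgebra B] [PartialOrder B]
    [StarOrderedRing B] {τ : ℕ → B →L[ℂ] B} (hτ1 : ∀ t, τ t 1 = 1)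
    (hτpos : ∀ t, ∀ x : B, 0 ≤ x → 0 ≤ τ t x) {φ₀ : B →L[ℂ] ℂ}
    (hφ₀pos : ∀ x, 0 ≤ x → 0 ≤ φ₀ x) (hφ₀1 : φ₀ 1 = 1) {p : B} (hp : IsStarProjection p)
    (hφ₀p : φ₀.comp (cornerCompression p) = φ₀) (hsub : ∀ t, p ≤ τ t p) {ψ : B →L[ℂ] ℂ}
    (hψ : ∀ x, 0 ≤ x → 0 ≤ ψ x) (hψ1 : ψ 1 = 1) {δ : ℝ} (hδ : 0 < δ) (hδ1 : δ < 1)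
    (hψq : ‖ψ (1 - p)‖ ≤ δ ^ 2)
    (hreduced : Tendsto (fun t => ‖(ψ.cornerState p).comp ((cornerCompression p).comp
      ((τ t).comp (cornerCompression p))) - φ₀.comp (cornerCompression p)‖) atTop (nhds 0)) :
    ∀ᶠ t in atTop, ‖ψ.comp (τ t) - φ₀‖ < 15 * δ := by
  filter_upwards [hreduced.eventually (gt_mem_nhds hδ)] with t ht
  calc ‖ψ.comp (τ t) - φ₀‖ ≤ 14 * δ + _ := norm_comp_sub_le_cornerState (hτpos t) (hτ1 t) hψ hψ1
        hφ₀pos hφ₀1 hp hφ₀p hδ.le hδ1 hψq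
        ((ψ.norm_apply_map_one_sub_le hψ (hτpos t) (hτ1 t) hp (hsub t)).trans hψq)
    _ < 15 * δ := by linarith

theorem strong_ergodicity_lifts_from_corner_general
    (τ : ℕ → A →L[ℂ] A)
    (hsemi : ∀ s t : ℕ, ∀ x : A, τ (s + t) x = τ s (τ t x))
    (hτ1 : ∀ t, τ t 1 = 1) (hτpos : ∀ t, ∀ x : A, 0 ≤ x → 0 ≤ τ t x)
    (φ₀ : A →L[ℂ] ℂ) (hφ₀pos : ∀ x : A, 0 ≤ x → 0 ≤ φ₀ x) (hφ₀1 : φ₀ 1 = 1)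
    (hφ₀inv : ∀ t, ∀ x : A, φ₀ (τ t x) = φ₀ x)
    (p : A) (hp : IsIdempotentElem p) (hpsa : IsSelfAdjoint p)
    (hsub : ∀ t, p ≤ τ t p)
    -- `s-limₜ τₜ(p) = 1` :
    (hslim : ∀ φ : A →L[ℂ] ℂ, (∀ x : A, 0 ≤ x → 0 ≤ φ x) → φ 1 = 1 →
      Tendsto (fun t : ℕ => φ (τ t p)) atTop (nhds 1))
    -- strong ergodicity of the reduced dynamics on the corner `pA₀p` :
    (hcorner : ∀ φ : A →L[ℂ] ℂ, (∀ x : A, 0 ≤ x → 0 ≤ φ x) → φ p = 1 →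
      (∀ x : A, φ x = φ (p * x * p)) →
      Tendsto
        (fun t : ℕ =>
          ‖(φ.comp ((cornerCompression p).comp
              ((τ t).comp (cornerCompression p)))) -
            φ₀.comp (cornerCompression p)‖)
        atTop (nhds 0)) :
    -- strong ergodicity of the full dynamics:
    ∀ φ : A →L[ℂ] ℂ, (∀ x : A, 0 ≤ x → 0 ≤ φ x) → φ 1 = 1 →
      Tendsto (fun t : ℕ => ‖φ.comp (τ t) - φ₀‖) atTop (nhds 0) := by
  let _ : CStarAlgebra A := {}
  intro φ hφ hφ1
  have hP : IsStarProjection p := ⟨hp, hpsa⟩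
  have hφ₀p : φ₀ p = 1 := tendsto_nhds_unique tendsto_const_nhds
    (by simpa only [hφ₀inv] using hslim φ₀ hφ₀pos hφ₀1)
  have hφ₀C := φ₀.comp_cornerCompression_eq_self hφ₀pos hφ₀1 hP hφ₀p
  refine Metric.tendsto_nhds.2 fun ε hε => ?_
  set δ := min (ε / 15) (1 / 2)
  have hδ : 0 < δ := by positivity
  have hδ1 : δ < 1 := (min_le_right _ _).trans_lt (by norm_num)
  obtain ⟨s, hψq⟩ : ∃ s, ‖φ (τ s (1 - p))‖ ≤ δ ^ 2 := by
    obtain ⟨s, hs⟩ := Metric.tendsto_atTop.1 (hslim φ hφ hφ1) (δ ^ 2) (by positivity)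
    exact ⟨s, by simpa [hτ1, hφ1, dist_eq_norm, norm_sub_rev] using (hs s le_rfl).le⟩
  set ψ := φ.comp (τ s)
  change ‖ψ (1 - p)‖ ≤ δ ^ 2 at hψq
  have hψ : ∀ x, 0 ≤ x → 0 ≤ ψ x := fun x hx => hφ _ (hτpos s x hx)
  have hψ1 : ψ 1 = 1 := by simp [ψ, hτ1, hφ1]
  have hψp : ψ p ≠ 0 :=
    ψ.apply_ne_zero_of_norm_apply_one_sub_lt hψ1 (hψq.trans_lt (by nlinarith))
  have hψτ := eventually_norm_comp_sub_lt hτ1 hτpos hφ₀pos hφ₀1 hP hφ₀C hsub hψ hψ1 hδ hδ1 hψq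
    (hcorner _ (ψ.cornerState_nonneg hψ hP) (ψ.cornerState_apply_self hp hψp)
      (ψ.cornerState_apply_cornerCompression hp))
  filter_upwards [(tendsto_sub_atTop_nat s).eventually hψτ, eventually_ge_atTop s] with u hu hsu
  obtain ⟨t, rfl⟩ := Nat.exists_eq_add_of_le hsu
  have hφτ : φ.comp (τ (s + t)) = ψ.comp (τ t) := by ext x; exact congrArg φ (hsemi s t x)
  rw [Nat.add_sub_cancel_left] at hu
  rw [dist_zero_right, norm_norm, hφτ]
  linarith [min_le_left (ε / 15) (1 / 2)]

/-- if `τₜ(p) → 1` strongly (equivalently `φ(τₜ p) → 1` for every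
state) and the reduced dynamics on the corner `pA₀p` is strongly ergodic in the
predual-norm sense, then so is the full dynamics. -/
theorem strong_ergodicity_lifts_from_corner
    (τ : ℕ → A →L[ℂ] A)
    (hsemi : ∀ s t : ℕ, ∀ x : A, τ (s + t) x = τ s (τ t x))
    (hτ0 : ∀ x : A, τ 0 x = x)
    (hτ1 : ∀ t, τ t 1 = 1) (hτpos : ∀ t, ∀ x : A, 0 ≤ x → 0 ≤ τ t x)
    (φ₀ : A →L[ℂ] ℂ) (hφ₀pos : ∀ x : A, 0 ≤ x → 0 ≤ φ₀ x) (hφ₀1 : φ₀ 1 = 1)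
    (hφ₀inv : ∀ t, ∀ x : A, φ₀ (τ t x) = φ₀ x)
    (p : A) (hp : IsIdempotentElem p) (hpsa : IsSelfAdjoint p)
    (hsub : ∀ t, p ≤ τ t p)
    -- `s-limₜ τₜ(p) = 1` :
    (hslim : ∀ φ : A →L[ℂ] ℂ, (∀ x : A, 0 ≤ x → 0 ≤ φ x) → φ 1 = 1 →
      Tendsto (fun t : ℕ => φ (τ t p)) atTop (nhds 1))
    -- strong ergodicity of the reduced dynamics on the corner `pA₀p` :
    (hcorner : ∀ φ : A →L[ℂ] ℂ, (∀ x : A, 0 ≤ x → 0 ≤ φ x) → φ p = 1 →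
      (∀ x : A, φ x = φ (p * x * p)) →
      Tendsto
        (fun t : ℕ =>
          ‖(φ.comp ((cornerCompression p).comp
              ((τ t).comp (cornerCompression p)))) -
            φ₀.comp (cornerCompression p)‖)
        atTop (nhds 0)) :
    -- strong ergodicity of the full dynamics:
    ∀ φ : A →L[ℂ] ℂ, (∀ x : A, 0 ≤ x → 0 ≤ φ x) → φ 1 = 1 →
      Tendsto (fun t : ℕ => ‖φ.comp (τ t) - φ₀‖) atTop (nhds 0) :=
  strong_ergodicity_lifts_from_corner_general τ hsemi hτ1 hτpos φ₀ hφ₀pos hφ₀1 hφ₀inv p hp hpsa hsub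
    hslim hcorner
end
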